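/- arXiv:1806.05137 — 2 statements merged into one kernel-verified Lean document; each statement's English description precedes it below -/
import Mathlib

section
/- Let Q be a Borel probability measure on [0,1], h ∈ L²(Q), and define H(u) = ∫_{[0,u]} h dQ. Then for any bounded measurable α : [0,1] → ℝ, ∫∫_{[0,1]²} α(max(x,y)) h(x)h(y) dQ(x)dQ(y) = ∫_{[0,1]} α(u) dν(u), where ν is the (signed) Stieltjes measure of the function u ↦ H(u)². -/
/-!
Write `h • Q = P - N`, where `P` and `N` have densities `h⁺` and `h⁻` with respect to `Q`.
Expanding the double integral bilinearly, the left side becomes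
`∫ α ∂(P.maxProd P + N.maxProd N) - ∫ α ∂(P.maxProd N + N.maxProd P)`. Since
`a.maxProd b (Iic u) = a (Iic u) * b (Iic u)`, the difference of these two measures has
distribution function `(P (Iic u) - N (Iic u))² = H u ^ 2`, the same as `νp - νm`, and finite
measures on `ℝ` are determined by their distribution functions.
-/

open MeasureTheory Set

section Pairing

variable {X : Type*} [MeasurableSpace X]

lemma integrable_of_abs_le {μ : Measure X} [IsFiniteMeasure μ] {g : X → ℝ}
    (hg : AEStronglyMeasurable g μ) (hgb : ∃ C, ∀ x, |g x| ≤ C) : Integrable g μ :=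
  let ⟨C, hC⟩ := hgb
  .of_bound hg C (.of_forall hC)

lemma abs_integral_le_of_abs_le {μ : Measure X} [IsFiniteMeasure μ] {g : X → ℝ} {C : ℝ}
    (hC : ∀ x, |g x| ≤ C) : |∫ x, g x ∂μ| ≤ C * μ.real univ :=
  norm_integral_le_of_norm_le_const (f := g) (.of_forall hC)

/-- `Q.withPosDensity h` and `Q.withPosDensity (-h)` form the Jordan decomposition of `h • Q`. -/
noncomputable def MeasureTheory.Measure.withPosDensity (Q : Measure X) (h : X → ℝ) : Measure X :=
  Q.withDensity fun x => ENNReal.ofReal (h x)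

variable {Q : Measure X} {h : X → ℝ}

lemma isFiniteMeasure_withPosDensity (hh : Integrable h Q) :
    IsFiniteMeasure (Q.withPosDensity h) :=
  isFiniteMeasure_withDensity_ofReal hh.hasFiniteIntegral

lemma integral_withPosDensity (hh : AEMeasurable h Q) (g : X → ℝ) :
    ∫ x, g x ∂Q.withPosDensity h = ∫ x, g x * max (h x) 0 ∂Q := by
  rw [Measure.withPosDensity, integral_withDensity_eq_integral_toReal_smul₀
    hh.ennreal_ofReal (.of_forall fun _ => ENNReal.ofReal_lt_top)]
  simp only [ENNReal.toReal_ofReal', smul_eq_mul, mul_comm]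

lemma integral_mul_eq_integral_withPosDensity_sub (hh : Integrable h Q) {g : X → ℝ}
    (hg : AEStronglyMeasurable g Q) (hgb : ∃ C, ∀ x, |g x| ≤ C) :
    ∫ x, g x * h x ∂Q =
      ∫ x, g x ∂Q.withPosDensity h - ∫ x, g x ∂Q.withPosDensity (-h) := by
  obtain ⟨C, hC⟩ := hgb
  have hbound : ∀ᵐ x ∂Q, ‖g x‖ ≤ C := .of_forall hC
  rw [integral_withPosDensity hh.aemeasurable, integral_withPosDensity hh.neg.aemeasurable,
    ← integral_sub (hh.pos_part.bdd_mul hg hbound) (hh.neg.pos_part.bdd_mul hg hbound)]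
  congr 1 with x
  rw [Pi.neg_apply, ← mul_sub, max_zero_sub_max_neg_zero_eq_self]

lemma measureReal_withPosDensity_sub (hh : Integrable h Q) {s : Set X} (hs : MeasurableSet s) :
    (Q.withPosDensity h).real s - (Q.withPosDensity (-h)).real s = ∫ x in s, h x ∂Q := by
  rw [integral_eq_lintegral_pos_part_sub_lintegral_neg_part hh.restrict, measureReal_def,
    measureReal_def, Measure.withPosDensity, Measure.withPosDensity, withDensity_apply _ hs,
    withDensity_apply _ hs]
  rfl

lemma integral_integral_mul_mul_eq (hh : Integrable h Q) {F : X × X → ℝ}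
    (hF : Measurable F) (hFb : ∃ C, ∀ z, |F z| ≤ C) :
    ∫ x, ∫ y, F (x, y) * (h x * h y) ∂Q ∂Q =
      (∫ z, F z ∂(Q.withPosDensity h).prod (Q.withPosDensity h)
        - ∫ z, F z ∂(Q.withPosDensity h).prod (Q.withPosDensity (-h)))
      - (∫ z, F z ∂(Q.withPosDensity (-h)).prod (Q.withPosDensity h)
        - ∫ z, F z ∂(Q.withPosDensity (-h)).prod (Q.withPosDensity (-h))) := by
  set P := Q.withPosDensity h
  set N := Q.withPosDensity (-h)
  have : IsFiniteMeasure P := isFiniteMeasure_withPosDensity hh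
  have : IsFiniteMeasure N := isFiniteMeasure_withPosDensity hh.neg
  obtain ⟨C, hC⟩ := hFb
  set G : X → ℝ := fun x => ∫ y, F (x, y) ∂P - ∫ y, F (x, y) ∂N
  have hG : Measurable G :=
    (hF.stronglyMeasurable.integral_prod_right'.sub
      hF.stronglyMeasurable.integral_prod_right').measurable
  have hGb : ∀ x, |G x| ≤ C * P.real univ + C * N.real univ := fun x =>
    (abs_sub _ _).trans (add_le_add (abs_integral_le_of_abs_le fun _ => hC _)
      (abs_integral_le_of_abs_le fun _ => hC _))
  have hinner : ∀ x, ∫ y, F (x, y) * (h x * h y) ∂Q = G x * h x := fun x => by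
    simp_rw [mul_left_comm _ (h x), integral_const_mul]
    rw [integral_mul_eq_integral_withPosDensity_sub hh (g := fun y => F (x, y))
      (hF.comp measurable_prodMk_left).aestronglyMeasurable ⟨C, fun _ => hC _⟩, mul_comm]
  have hslice : ∀ (b : Measure X) [IsFiniteMeasure b] (a : Measure X) [IsFiniteMeasure a],
      Integrable (fun x => ∫ y, F (x, y) ∂b) a := fun b _ a _ =>
    integrable_of_abs_le hF.stronglyMeasurable.integral_prod_right'.aestronglyMeasurable
      ⟨_, fun _ => abs_integral_le_of_abs_le fun _ => hC _⟩
  have hprod : ∀ (a : Measure X) [IsFiniteMeasure a] (b : Measure X) [IsFiniteMeasure b],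
      ∫ z, F z ∂a.prod b = ∫ x, ∫ y, F (x, y) ∂b ∂a := fun a _ b _ =>
    integral_prod _ (integrable_of_abs_le hF.aestronglyMeasurable ⟨C, hC⟩)
  simp_rw [hinner]
  rw [integral_mul_eq_integral_withPosDensity_sub hh hG.aestronglyMeasurable ⟨_, hGb⟩,
    integral_sub (hslice P P) (hslice N P), integral_sub (hslice P N) (hslice N N),
    hprod P P, hprod P N, hprod N P, hprod N N]

end Pairing

section Maximum

/-- The law of `max X Y` for independent `X ∼ a` and `Y ∼ b`. -/
noncomputable def MeasureTheory.Measure.maxProd (a b : Measure ℝ) : Measure ℝ :=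
  (a.prod b).map fun z => max z.1 z.2

variable {a b : Measure ℝ}

instance [IsFiniteMeasure a] [IsFiniteMeasure b] : IsFiniteMeasure (a.maxProd b) := by
  unfold Measure.maxProd
  infer_instance

lemma measurable_max_fst_snd : Measurable fun z : ℝ × ℝ => max z.1 z.2 :=
  measurable_fst.max measurable_snd

lemma maxProd_Iic [SFinite a] [SFinite b] (u : ℝ) :
    a.maxProd b (Iic u) = a (Iic u) * b (Iic u) := by
  rw [Measure.maxProd, Measure.map_apply measurable_max_fst_snd measurableSet_Iic,
    ← Measure.prod_prod]
  congr 1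
  ext z
  simp [Prod.le_def]

lemma integral_maxProd {α : ℝ → ℝ} (hα : Measurable α) :
    ∫ u, α u ∂a.maxProd b = ∫ z, α (max z.1 z.2) ∂a.prod b :=
  integral_map measurable_max_fst_snd.aemeasurable hα.aestronglyMeasurable

end Maximum

lemma integral_sub_integral_eq_of_measureReal_Iic_sub_eq {ρ σ ρ' σ' : Measure ℝ}
    [IsFiniteMeasure ρ] [IsFiniteMeasure σ] [IsFiniteMeasure ρ'] [IsFiniteMeasure σ']
    (hcdf : ∀ u, ρ.real (Iic u) - σ.real (Iic u) = ρ'.real (Iic u) - σ'.real (Iic u))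
    {α : ℝ → ℝ} (hα : Measurable α) (hαb : ∃ C, ∀ x, |α x| ≤ C) :
    ∫ u, α u ∂ρ - ∫ u, α u ∂σ = ∫ u, α u ∂ρ' - ∫ u, α u ∂σ' := by
  have hsum : ρ + σ' = ρ' + σ := by
    refine Measure.ext_of_Iic _ _ fun u => ?_
    rw [← ENNReal.toReal_eq_toReal_iff' (by finiteness) (by finiteness), Measure.add_apply, Measure.add_apply, ENNReal.toReal_add (by finiteness) (by finiteness),
      ENNReal.toReal_add (by finiteness) (by finiteness)]
    simp only [← measureReal_def]
    linarith [hcdf u]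
  have hint : ∀ (μ : Measure ℝ) [IsFiniteMeasure μ], Integrable α μ := fun _ _ =>
    integrable_of_abs_le hα.aestronglyMeasurable hαb
  have := congrArg (fun μ => ∫ u, α u ∂μ) hsum
  simp only [integral_add_measure (hint ρ) (hint σ'), integral_add_measure (hint ρ') (hint σ)]
    at this
  linarith

theorem stmt_11_general (Q : Measure ℝ) [IsProbabilityMeasure Q]
    (h : ℝ → ℝ) (hL2 : MemLp h 2 Q)
    (H : ℝ → ℝ) (hH : ∀ u, H u = ∫ x in Set.Iic u, h x ∂Q)
    (νp νm : Measure ℝ) [IsFiniteMeasure νp] [IsFiniteMeasure νm]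
    (hν : ∀ u : ℝ, (νp (Set.Iic u)).toReal - (νm (Set.Iic u)).toReal = (H u) ^ 2)
    (α : ℝ → ℝ) (hαm : Measurable α) (hαb : ∃ C, ∀ x, |α x| ≤ C) :
    ∫ x, ∫ y, α (max x y) * (h x * h y) ∂Q ∂Q =
      (∫ u, α u ∂νp) - ∫ u, α u ∂νm := by
  have hh : Integrable h Q := hL2.integrable one_le_two
  set P := Q.withPosDensity h
  set N := Q.withPosDensity (-h)
  have : IsFiniteMeasure P := isFiniteMeasure_withPosDensity hh
  have : IsFiniteMeasure N := isFiniteMeasure_withPosDensity hh.neg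
  have hint : ∀ (μ : Measure ℝ) [IsFiniteMeasure μ], Integrable α μ := fun _ _ =>
    integrable_of_abs_le hαm.aestronglyMeasurable hαb
  have hcdf : ∀ u, (P.maxProd P + N.maxProd N).real (Iic u)
      - (P.maxProd N + N.maxProd P).real (Iic u) = νp.real (Iic u) - νm.real (Iic u) := by
    intro u
    have hPN := measureReal_withPosDensity_sub hh (measurableSet_Iic (a := u))
    rw [measureReal_add_apply, measureReal_add_apply]
    simp only [measureReal_def, maxProd_Iic, ENNReal.toReal_mul] at hPN ⊢
    rw [hν u, hH u, ← hPN]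
    ring
  calc ∫ x, ∫ y, α (max x y) * (h x * h y) ∂Q ∂Q
      = (∫ z, α (max z.1 z.2) ∂P.prod P - ∫ z, α (max z.1 z.2) ∂P.prod N)
        - (∫ z, α (max z.1 z.2) ∂N.prod P - ∫ z, α (max z.1 z.2) ∂N.prod N) :=
        integral_integral_mul_mul_eq hh (hαm.comp measurable_max_fst_snd) (hαb.imp fun _ hC _ => hC _)
    _ = ∫ u, α u ∂(P.maxProd P + N.maxProd N) - ∫ u, α u ∂(P.maxProd N + N.maxProd P) := by
        rw [integral_add_measure (hint _) (hint _), integral_add_measure (hint _) (hint _),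
          integral_maxProd hαm, integral_maxProd hαm, integral_maxProd hαm, integral_maxProd hαm]
        ring
    _ = (∫ u, α u ∂νp) - ∫ u, α u ∂νm :=
        integral_sub_integral_eq_of_measureReal_Iic_sub_eq hcdf hαm hαb

theorem stmt_11 (Q : Measure ℝ) [IsProbabilityMeasure Q]
    (hQsupp : Q (Set.Icc (0:ℝ) 1)ᶜ = 0)
    (h : ℝ → ℝ) (hmeas : Measurable h) (hL2 : MemLp h 2 Q)
    (H : ℝ → ℝ) (hH : ∀ u, H u = ∫ x in Set.Iic u, h x ∂Q)
    (νp νm : Measure ℝ) [IsFiniteMeasure νp] [IsFiniteMeasure νm]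
    (hν : ∀ u : ℝ, (νp (Set.Iic u)).toReal - (νm (Set.Iic u)).toReal = (H u) ^ 2)
    (α : ℝ → ℝ) (hαm : Measurable α) (hαb : ∃ C, ∀ x, |α x| ≤ C) :
    ∫ x, ∫ y, α (max x y) * (h x * h y) ∂Q ∂Q =
      (∫ u, α u ∂νp) - ∫ u, α u ∂νm :=
  stmt_11_general Q h hL2 H hH νp νm hν α hαm hαb
end

section
/- Let Q be a probability measure on [0,1] and α : [0,1] → ℝ bounded measurable with ∫ α dQ² = 0, where Q² is the law of max of two i.i.d. Q-variables. Let φ_α(x,y) = α(max(x,y)) and ℒ* the double-centering projection with respect to Q. Then ⟨ℒ*φ_α, ℒ*φ_α⟩_{Q×Q} = ⟨α, α⟩_{Q²} − ⟨α, Sα⟩_{Q²}, where (Sα)(x) = α(x)Q(x) + 4∫_{(x,1]} α(t) dQ(t), with Q(x) = Q([0,x]) and the inner products ⟨f,g⟩_{Q²} = ∫ f g dQ². -/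
/-!
`ℒ*` is the projection that removes from `φ` its part of the form `a(x) + b(y)`, so,
by the variance formula applied fibrewise, `‖ℒ*φ‖² = ‖φ‖² − ‖g₁‖² − ‖g₂‖² + (∫ φ)²`, where
`g₁, g₂` are the two marginal means of `φ`. For `φ = α ∘ max` both marginals equal
`g(x) = α(x) F(x) + h(x)`, where `F` is the cdf of `Q` and `h(x) = ∫_{(x,∞)} α dQ`, and the
mean `∫ α dQ²` vanishes, so the left side is `⟨α, α⟩_{Q²} − 2 ‖g‖²`.

Since `Q` has no atoms, the diagonal is `Q × Q`-null and every symmetric kernel integrates to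
twice its integral over `{s < t}`. This gives `dQ² = 2F dQ`, and, after writing `h(x)²` as a
double integral over `{s, t > x}` and integrating out `x`, `∫ h² dQ = 2 ∫ α F h dQ`.
Expanding `g²` with this identity yields `2 ‖g‖² = ⟨α, Sα⟩_{Q²}`.
-/

open MeasureTheory

/-- The double-centering projection `ℒ*` associated with a measure `Q`. -/
noncomputable def Lstar (Q : Measure ℝ) (φ : ℝ × ℝ → ℝ) : ℝ × ℝ → ℝ :=
  fun p => φ p - (∫ t, φ (p.1, t) ∂Q) - (∫ s, φ (s, p.2) ∂Q) + ∫ q, φ q ∂(Q.prod Q)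

open ProbabilityTheory Set

section Bounded

variable {X : Type*} [MeasurableSpace X] {μ : Measure X} {f : X → ℝ} {C : ℝ}

lemma integrable_of_abs_le_s17 [IsFiniteMeasure μ] (hf : Measurable f) (hb : ∀ x, |f x| ≤ C) :
    Integrable f μ :=
  .of_bound hf.aestronglyMeasurable C (ae_of_all _ hb)

lemma memLp_of_abs_le [IsFiniteMeasure μ] (p : ENNReal) (hf : Measurable f)
    (hb : ∀ x, |f x| ≤ C) : MemLp f p μ :=
  .of_bound hf.aestronglyMeasurable C (ae_of_all _ hb)

lemma abs_setIntegral_le_of_abs_le [IsProbabilityMeasure μ] (hb : ∀ x, |f x| ≤ C) (s : Set X) :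
    |∫ x in s, f x ∂μ| ≤ C := by
  have hC : 0 ≤ C := (abs_nonneg _).trans (hb (nonempty_of_isProbabilityMeasure μ).some)
  calc |∫ x in s, f x ∂μ| = ‖∫ x in s, f x ∂μ‖ := (Real.norm_eq_abs _).symm
    _ ≤ C * μ.real s := norm_setIntegral_le_of_norm_le_const (measure_lt_top μ s) fun x _ => hb x
    _ ≤ C := mul_le_of_le_one_right hC measureReal_le_one

lemma abs_integral_le_of_abs_le_s17 [IsProbabilityMeasure μ] (hb : ∀ x, |f x| ≤ C) :
    |∫ x, f x ∂μ| ≤ C := by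
  simpa using abs_setIntegral_le_of_abs_le hb univ

lemma integral_sub_integral_sq [IsProbabilityMeasure μ] (hf : MemLp f 2 μ) :
    ∫ x, (f x - ∫ y, f y ∂μ) ^ 2 ∂μ = ∫ x, f x ^ 2 ∂μ - (∫ x, f x ∂μ) ^ 2 := by
  rw [← variance_eq_integral hf.aestronglyMeasurable.aemeasurable, variance_eq_sub hf]
  rfl

end Bounded

section Centering

variable {X Y : Type*} [MeasurableSpace X] [MeasurableSpace Y] {μ : Measure X} {ν : Measure Y}
  {φ : X × Y → ℝ} {C : ℝ}

lemma integral_sub_integral_snd_sq [IsFiniteMeasure μ] [IsProbabilityMeasure ν]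
    (hφ : Measurable φ) (hb : ∀ p, |φ p| ≤ C) :
    ∫ p, (φ p - ∫ y, φ (p.1, y) ∂ν) ^ 2 ∂(μ.prod ν) =
      ∫ p, φ p ^ 2 ∂(μ.prod ν) - ∫ x, (∫ y, φ (x, y) ∂ν) ^ 2 ∂μ := by
  set c := fun x => ∫ y, φ (x, y) ∂ν
  have hc : Measurable c := hφ.stronglyMeasurable.integral_prod_right'.measurable
  have hcb : ∀ x, |c x| ≤ C := fun x => abs_integral_le_of_abs_le_s17 fun y => hb (x, y)
  have hφ2 : Integrable (fun p => φ p ^ 2) (μ.prod ν) :=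
    integrable_of_abs_le_s17 (C := C ^ 2) (hφ.pow_const 2) fun p => by
      rw [abs_pow]; exact pow_le_pow_left₀ (abs_nonneg _) (hb p) 2
  have hsub : Integrable (fun p => (φ p - c p.1) ^ 2) (μ.prod ν) :=
    integrable_of_abs_le_s17 (C := (2 * C) ^ 2) ((hφ.sub (hc.comp measurable_fst)).pow_const 2)
      fun p => by
        rw [abs_pow]
        exact pow_le_pow_left₀ (abs_nonneg _) ((abs_sub _ _).trans (by linarith [hb p, hcb p.1])) 2
  have hc2 : Integrable (fun x => c x ^ 2) μ :=
    integrable_of_abs_le_s17 (C := C ^ 2) (hc.pow_const 2) fun x => by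
      rw [abs_pow]; exact pow_le_pow_left₀ (abs_nonneg _) (hcb x) 2
  have hfiber (x : X) : ∫ y, (φ (x, y) - c x) ^ 2 ∂ν = ∫ y, φ (x, y) ^ 2 ∂ν - c x ^ 2 :=
    integral_sub_integral_sq (memLp_of_abs_le 2 (hφ.comp measurable_prodMk_left) fun y => hb _)
  rw [integral_prod _ hsub, integral_prod _ hφ2]
  simp only [hfiber]
  exact integral_sub hφ2.integral_prod_left hc2

lemma integral_sub_integral_fst_sq [IsProbabilityMeasure μ] [IsFiniteMeasure ν]
    (hφ : Measurable φ) (hb : ∀ p, |φ p| ≤ C) :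
    ∫ p, (φ p - ∫ x, φ (x, p.2) ∂μ) ^ 2 ∂(μ.prod ν) =
      ∫ p, φ p ^ 2 ∂(μ.prod ν) - ∫ y, (∫ x, φ (x, y) ∂μ) ^ 2 ∂ν := by
  have h := integral_sub_integral_snd_sq (μ := ν) (ν := μ) (hφ.comp measurable_swap)
    fun p => hb p.swap
  simp only [Function.comp_apply, Prod.swap_prod_mk] at h
  rw [← integral_prod_swap, ← integral_prod_swap (fun p => φ p ^ 2)]
  exact h

end Centering

theorem integral_Lstar_sq (Q : Measure ℝ) [IsProbabilityMeasure Q] {φ : ℝ × ℝ → ℝ}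
    (hφ : Measurable φ) {C : ℝ} (hb : ∀ p, |φ p| ≤ C) :
    ∫ p, Lstar Q φ p ^ 2 ∂(Q.prod Q) =
      ∫ p, φ p ^ 2 ∂(Q.prod Q) - ∫ x, (∫ t, φ (x, t) ∂Q) ^ 2 ∂Q
        - ∫ y, (∫ s, φ (s, y) ∂Q) ^ 2 ∂Q + (∫ p, φ p ∂(Q.prod Q)) ^ 2 := by
  set g₁ := fun x => ∫ t, φ (x, t) ∂Q
  set g₂ := fun y => ∫ s, φ (s, y) ∂Q
  set m := ∫ p, φ p ∂(Q.prod Q)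
  have hg₂ : Measurable g₂ := hφ.stronglyMeasurable.integral_prod_left'.measurable
  have hg₂b : ∀ y, |g₂ y| ≤ C := fun y => abs_integral_le_of_abs_le_s17 fun s => hb (s, y)
  have hg₁b : ∀ x, |g₁ x| ≤ C := fun x => abs_integral_le_of_abs_le_s17 fun t => hb (x, t)
  have hφi : Integrable φ (Q.prod Q) := integrable_of_abs_le_s17 hφ hb
  have hg₁m : ∫ x, g₁ x ∂Q = m := (integral_prod φ hφi).symm
  have hg₂m : ∫ y, g₂ y ∂Q = m := (integral_prod_symm φ hφi).symm
  -- `ψ` is `φ` centred in its first variable; centring `ψ` in its second variable gives `ℒ* φ`.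
  set ψ := fun p : ℝ × ℝ => φ p - g₂ p.2
  have hψ : Measurable ψ := hφ.sub (hg₂.comp measurable_snd)
  have hψb : ∀ p, |ψ p| ≤ 2 * C := fun p => (abs_sub _ _).trans (by linarith [hb p, hg₂b p.2])
  have hψ_snd (x : ℝ) : ∫ t, ψ (x, t) ∂Q = g₁ x - m := by
    change ∫ t, (φ (x, t) - g₂ t) ∂Q = _
    rw [integral_sub (integrable_of_abs_le_s17 (f := fun t => φ (x, t))
      (hφ.comp measurable_prodMk_left) fun t => hb _)
      (integrable_of_abs_le_s17 hg₂ hg₂b), hg₂m]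
  have hL : Lstar Q φ = fun p => ψ p - ∫ t, ψ (p.1, t) ∂Q := by
    ext p
    simp only [Lstar, hψ_snd, ψ]
    ring
  rw [hL, integral_sub_integral_snd_sq hψ hψb, integral_sub_integral_fst_sq hφ hb]
  simp only [hψ_snd]
  have hg₁_var : ∫ x, (g₁ x - m) ^ 2 ∂Q = ∫ x, g₁ x ^ 2 ∂Q - m ^ 2 := by
    rw [← hg₁m]
    exact integral_sub_integral_sq
      (memLp_of_abs_le 2 hφ.stronglyMeasurable.integral_prod_right'.measurable hg₁b)
  rw [hg₁_var]
  ring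

lemma measure_diagonal_eq_zero {α : Type*} [MeasurableSpace α] [MeasurableEq α] {μ : Measure α}
    {ν : Measure α} [SFinite ν] [NullSingletonClass ν] : (μ.prod ν) (diagonal α) = 0 := by
  rw [Measure.prod_apply measurableSet_diagonal]
  simp [preimage, diagonal]

section Halves

variable {μ ν : Measure ℝ} [SFinite μ] [SFinite ν] {K : ℝ × ℝ → ℝ}

lemma setIntegral_fst_lt_snd_eq_integral_Ioi (hK : Integrable K (μ.prod ν)) :
    ∫ p in {p | p.1 < p.2}, K p ∂(μ.prod ν) = ∫ x, ∫ y in Ioi x, K (x, y) ∂ν ∂μ := by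
  rw [← integral_indicator (measurableSet_lt measurable_fst measurable_snd),
    integral_prod _ (hK.indicator (measurableSet_lt measurable_fst measurable_snd))]
  congr 1 with x
  rw [← integral_indicator measurableSet_Ioi]
  rfl

lemma setIntegral_fst_lt_snd_eq_integral_Iio (hK : Integrable K (μ.prod ν)) :
    ∫ p in {p | p.1 < p.2}, K p ∂(μ.prod ν) = ∫ y, ∫ x in Iio y, K (x, y) ∂μ ∂ν := by
  rw [← integral_indicator (measurableSet_lt measurable_fst measurable_snd),
    integral_prod_symm _ (hK.indicator (measurableSet_lt measurable_fst measurable_snd))]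
  congr 1 with y
  rw [← integral_indicator measurableSet_Iio]
  rfl

end Halves

lemma integral_eq_two_mul_setIntegral_fst_lt_snd {μ : Measure ℝ} [SFinite μ] [NullSingletonClass μ]
    {K : ℝ × ℝ → ℝ} (hK : Integrable K (μ.prod μ)) (hsymm : ∀ p, K p.swap = K p) :
    ∫ p, K p ∂(μ.prod μ) = 2 * ∫ p in {p | p.1 < p.2}, K p ∂(μ.prod μ) := by
  set S : Set (ℝ × ℝ) := {p | p.1 < p.2}
  have hS : MeasurableSet S := measurableSet_lt measurable_fst measurable_snd
  have hcompl : (Sᶜ : Set (ℝ × ℝ)) =ᵐ[μ.prod μ] (Prod.swap ⁻¹' S : Set (ℝ × ℝ)) := by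
    refine ae_eq_set.2 ⟨measure_mono_null (fun p ⟨h₁, h₂⟩ => ?_) measure_diagonal_eq_zero,
      measure_mono_null (fun p ⟨h₁, h₂⟩ => ?_) measure_empty⟩
    · exact le_antisymm (not_lt.1 h₂) (not_lt.1 h₁)
    · exact (not_not.1 h₂ : p.1 < p.2).asymm h₁
  have hswap := (Measure.measurePreserving_swap (μ := μ) (ν := μ)).setIntegral_preimage_emb
    MeasurableEquiv.prodComm.measurableEmbedding K S
  simp only [hsymm] at hswap
  rw [← integral_add_compl hS hK, setIntegral_congr_set hcompl, hswap, two_mul]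

lemma measurable_setIntegral_Ioi {μ : Measure ℝ} [SFinite μ] {f : ℝ → ℝ} (hf : Measurable f) :
    Measurable fun x => ∫ t in Ioi x, f t ∂μ := by
  have hS : MeasurableSet {p : ℝ × ℝ | p.1 < p.2} := measurableSet_lt measurable_fst measurable_snd
  convert (StronglyMeasurable.integral_prod_right' (ν := μ)
    ((hf.comp measurable_snd).indicator hS).stronglyMeasurable).measurable using 2 with x
  rw [← integral_indicator measurableSet_Ioi]
  rfl

lemma abs_cdf_le_one (Q : Measure ℝ) (x : ℝ) : |cdf Q x| ≤ 1 :=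
  abs_le.2 ⟨by linarith [cdf_nonneg Q x], cdf_le_one Q x⟩

section CDF

variable {Q : Measure ℝ} [IsProbabilityMeasure Q] {f : ℝ → ℝ} {C : ℝ}

lemma measureReal_Iio_eq_cdf [NullSingletonClass Q] (x : ℝ) : Q.real (Iio x) = cdf Q x := by
  rw [cdf_eq_real, measureReal_congr Iio_ae_eq_Iic]

lemma integral_comp_max_left (hf : Measurable f) (hb : ∀ x, |f x| ≤ C) (x : ℝ) :
    ∫ t, f (max x t) ∂Q = f x * cdf Q x + ∫ t in Ioi x, f t ∂Q := by
  have hfi : Integrable (fun t => f (max x t)) Q :=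
    integrable_of_abs_le_s17 (hf.comp (measurable_const.max measurable_id)) fun t => hb _
  rw [← integral_add_compl measurableSet_Iic hfi, compl_Iic,
    setIntegral_congr_fun measurableSet_Iic fun t (ht : t ≤ x) => by rw [max_eq_left ht],
    setIntegral_congr_fun measurableSet_Ioi fun t (ht : x < t) => by rw [max_eq_right ht.le],
    setIntegral_const, cdf_eq_real, smul_eq_mul, mul_comm]

lemma integral_comp_max [NullSingletonClass Q] (hf : Measurable f) (hb : ∀ x, |f x| ≤ C) :
    ∫ p, f (max p.1 p.2) ∂(Q.prod Q) = 2 * ∫ x, f x * cdf Q x ∂Q := by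
  have hfi : Integrable (fun p : ℝ × ℝ => f (max p.1 p.2)) (Q.prod Q) :=
    integrable_of_abs_le_s17 (hf.comp (measurable_fst.max measurable_snd)) fun p => hb _
  rw [integral_eq_two_mul_setIntegral_fst_lt_snd hfi fun p => by simp [max_comm],
    setIntegral_fst_lt_snd_eq_integral_Iio hfi]
  congr 2 with y
  rw [setIntegral_congr_fun measurableSet_Iio fun x (hx : x < y) => by rw [max_eq_right hx.le],
    setIntegral_const, measureReal_Iio_eq_cdf, smul_eq_mul, mul_comm]

end CDF

section Tail

variable {Q : Measure ℝ} [IsProbabilityMeasure Q] [NullSingletonClass Q] {α : ℝ → ℝ} {C : ℝ}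

lemma integral_sq_setIntegral_Ioi_eq_integral_prod (hα : Measurable α) (hb : ∀ x, |α x| ≤ C) :
    ∫ x, (∫ t in Ioi x, α t ∂Q) ^ 2 ∂Q =
      ∫ p, α p.1 * α p.2 * cdf Q (min p.1 p.2) ∂(Q.prod Q) := by
  -- `h(x)²` is the integral of `α s α t` over `{s, t > x}`; integrating out `x` first leaves
  -- the weight `Q (Iio (min s t))`.
  set G : ℝ → ℝ × ℝ → ℝ := fun x p => (Iio (min p.1 p.2)).indicator (fun _ => α p.1 * α p.2) x
  have hsq (x : ℝ) : (∫ t in Ioi x, α t ∂Q) ^ 2 = ∫ p, G x p ∂(Q.prod Q) := by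
    rw [sq, ← integral_indicator measurableSet_Ioi, ← integral_prod_mul]
    congr 1 with p
    by_cases h₁ : x < p.1 <;> by_cases h₂ : x < p.2 <;>
      simp [G, indicator_apply, h₁, h₂]
  have hG : Integrable (Function.uncurry G) (Q.prod (Q.prod Q)) := by
    refine integrable_of_abs_le_s17 (C := C * C) ?_ fun q => ?_
    · exact ((hα.comp measurable_snd.fst).mul (hα.comp measurable_snd.snd)).indicator
        (measurableSet_lt measurable_fst (measurable_snd.fst.min measurable_snd.snd))
    · change ‖(Iio (min q.2.1 q.2.2)).indicator (fun _ => α q.2.1 * α q.2.2) q.1‖ ≤ C * C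
      refine (norm_indicator_le_norm_self _ _).trans ?_
      rw [Real.norm_eq_abs, abs_mul]
      exact mul_le_mul (hb _) (hb _) (abs_nonneg _) ((abs_nonneg _).trans (hb 0))
  simp only [hsq]
  rw [integral_integral_swap hG]
  congr 1 with p
  rw [integral_indicator_const _ measurableSet_Iio, measureReal_Iio_eq_cdf, smul_eq_mul, mul_comm]

lemma integral_sq_setIntegral_Ioi (hα : Measurable α) (hb : ∀ x, |α x| ≤ C) :
    ∫ x, (∫ t in Ioi x, α t ∂Q) ^ 2 ∂Q = 2 * ∫ x, α x * cdf Q x * ∫ t in Ioi x, α t ∂Q ∂Q := by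
  have hC : 0 ≤ C := (abs_nonneg _).trans (hb 0)
  have hK : Integrable (fun p : ℝ × ℝ => α p.1 * α p.2 * cdf Q (min p.1 p.2)) (Q.prod Q) := by
    refine integrable_of_abs_le_s17 (C := C * C * 1) ?_ fun p => ?_
    · exact ((hα.comp measurable_fst).mul (hα.comp measurable_snd)).mul
        ((cdf Q).mono.measurable.comp (measurable_fst.min measurable_snd))
    · rw [abs_mul, abs_mul]
      exact mul_le_mul (mul_le_mul (hb _) (hb _) (abs_nonneg _) hC) (abs_cdf_le_one Q _)
        (abs_nonneg _) (by positivity)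
  rw [integral_sq_setIntegral_Ioi_eq_integral_prod hα hb,
    integral_eq_two_mul_setIntegral_fst_lt_snd hK fun p => by simp [mul_comm, min_comm],
    setIntegral_fst_lt_snd_eq_integral_Ioi hK]
  congr 2 with x
  rw [setIntegral_congr_fun measurableSet_Ioi fun y (hy : x < y) => by rw [min_eq_left hy.le],
    ← integral_const_mul]
  congr 1 with y
  ring

lemma integral_sq_integral_comp_max (hα : Measurable α) (hb : ∀ x, |α x| ≤ C) :
    ∫ x, (∫ t, α (max x t) ∂Q) ^ 2 ∂Q =
      ∫ x, α x * (α x * cdf Q x + 4 * ∫ t in Ioi x, α t ∂Q) * cdf Q x ∂Q := by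
  set h := fun x => ∫ t in Ioi x, α t ∂Q
  have hα' : MemLp α ⊤ Q := memLp_of_abs_le ⊤ hα hb
  have hF : MemLp (cdf Q) ⊤ Q := memLp_of_abs_le ⊤ (cdf Q).mono.measurable (abs_cdf_le_one Q)
  have hh : MemLp h ⊤ Q :=
    memLp_of_abs_le ⊤ (measurable_setIntegral_Ioi hα) fun x => abs_setIntegral_le_of_abs_le hb _
  have hαF : MemLp (fun x => α x * cdf Q x) ⊤ Q := hF.mul' (r := ⊤) hα'
  have I₁ : Integrable (fun x => α x * (α x * cdf Q x + 4 * h x) * cdf Q x) Q :=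
    (hF.mul' (r := ⊤) ((hαF.add (hh.const_mul 4)).mul' (r := ⊤) hα')).integrable le_top
  have I₂ : Integrable (fun x => h x ^ 2) Q := (hh.mono_exponent le_top).integrable_sq
  have I₃ : Integrable (fun x => 2 * (α x * cdf Q x * h x)) Q :=
    ((hh.mul' (r := ⊤) hαF).integrable le_top).const_mul 2
  have I₄ : Integrable (fun x => h x ^ 2 - 2 * (α x * cdf Q x * h x)) Q := I₂.sub I₃
  have htail : ∫ x, (h x ^ 2 - 2 * (α x * cdf Q x * h x)) ∂Q = 0 := by
    rw [integral_sub I₂ I₃, integral_sq_setIntegral_Ioi hα hb, integral_const_mul, sub_self]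
  have hsplit (x : ℝ) : (α x * cdf Q x + h x) ^ 2 =
      α x * (α x * cdf Q x + 4 * h x) * cdf Q x + (h x ^ 2 - 2 * (α x * cdf Q x * h x)) := by
    ring
  simp only [integral_comp_max_left hα hb]
  change ∫ x, (α x * cdf Q x + h x) ^ 2 ∂Q = _
  simp only [hsplit]
  rw [integral_add I₁ I₄, htail, add_zero]

theorem integral_map_max_mul_eq (hα : Measurable α) (hb : ∀ x, |α x| ≤ C) :
    ∫ u, α u * (α u * cdf Q u + 4 * ∫ t in Ioi u, α t ∂Q) ∂(Q.prod Q).map (fun p => max p.1 p.2) =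
      2 * ∫ x, (∫ t, α (max x t) ∂Q) ^ 2 ∂Q := by
  have hC : 0 ≤ C := (abs_nonneg _).trans (hb 0)
  have hm : Measurable fun u => α u * (α u * cdf Q u + 4 * ∫ t in Ioi u, α t ∂Q) :=
    hα.mul ((hα.mul (cdf Q).mono.measurable).add
      ((measurable_setIntegral_Ioi hα).const_mul 4))
  have hbound (u : ℝ) :
      |α u * (α u * cdf Q u + 4 * ∫ t in Ioi u, α t ∂Q)| ≤ C * (C * 1 + 4 * C) := by
    rw [abs_mul]
    refine mul_le_mul (hb u) ((abs_add_le _ _).trans (add_le_add ?_ ?_)) (abs_nonneg _) hC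
    · rw [abs_mul]; exact mul_le_mul (hb u) (abs_cdf_le_one Q u) (abs_nonneg _) hC
    · rw [abs_mul, abs_of_pos four_pos]
      exact mul_le_mul_of_nonneg_left (abs_setIntegral_le_of_abs_le hb _) zero_le_four
  rw [integral_map (measurable_fst.max measurable_snd).aemeasurable hm.aestronglyMeasurable,
    integral_comp_max hm hbound, integral_sq_integral_comp_max hα hb]

end Tail

lemma toReal_measure_Icc_eq_cdf {Q : Measure ℝ} [IsProbabilityMeasure Q] (hQ : Q (Icc 0 1)ᶜ = 0)
    {x : ℝ} (hx : x ≤ 1) : (Q (Icc 0 x)).toReal = cdf Q x := by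
  have hIcc : Iic x ∩ Icc 0 1 = Icc 0 x := by
    ext t; simp only [mem_inter_iff, mem_Iic, mem_Icc]; grind
  rw [cdf_eq_real, measureReal_def, ← hIcc, measure_inter_conull hQ]

lemma setIntegral_Ioc_one_eq_Ioi {Q : Measure ℝ} (hQ : Q (Icc 0 1)ᶜ = 0) (f : ℝ → ℝ) {x : ℝ}
    (hx : 0 ≤ x) : ∫ t in Ioc x 1, f t ∂Q = ∫ t in Ioi x, f t ∂Q := by
  have hIoc : Ioi x ∩ Icc 0 1 = Ioc x 1 := by
    ext t; simp only [mem_inter_iff, mem_Ioi, mem_Icc, mem_Ioc]; grind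
  rw [← hIoc, setIntegral_congr_set (inter_ae_eq_left_of_ae_eq_univ (ae_eq_univ.2 hQ))]

lemma ae_mem_map_max {μ : Measure ℝ} [SFinite μ] {s : Set ℝ} (hs : MeasurableSet s)
    (h : ∀ᵐ x ∂μ, x ∈ s) : ∀ᵐ u ∂(μ.prod μ).map (fun p => max p.1 p.2), u ∈ s := by
  rw [ae_map_iff (p := (· ∈ s)) (measurable_fst.max measurable_snd).aemeasurable hs]
  filter_upwards [Measure.quasiMeasurePreserving_fst.ae h,
    Measure.quasiMeasurePreserving_snd.ae h] with p h₁ h₂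
  rcases max_choice p.1 p.2 with hp | hp <;> rw [hp] <;> assumption

theorem stmt_17 (Q : Measure ℝ) [IsProbabilityMeasure Q] [NullSingletonClass Q]
    (hQsupp : Q (Set.Icc (0:ℝ) 1)ᶜ = 0)
    (Q2 : Measure ℝ) (hQ2 : Q2 = (Q.prod Q).map (fun p : ℝ × ℝ => max p.1 p.2))
    (α : ℝ → ℝ) (hαm : Measurable α) (hαb : ∃ C, ∀ x, |α x| ≤ C)
    (hmean : ∫ u, α u ∂Q2 = 0)
    (Sα : ℝ → ℝ)
    (hS : ∀ x, Sα x = α x * (Q (Set.Icc 0 x)).toReal + 4 * ∫ t in Set.Ioc x 1, α t ∂Q) :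
    ∫ p, (Lstar Q (fun p : ℝ × ℝ => α (max p.1 p.2)) p) ^ 2 ∂(Q.prod Q) =
      (∫ u, (α u) ^ 2 ∂Q2) - ∫ u, α u * Sα u ∂Q2 := by
  obtain ⟨C, hC⟩ := hαb
  subst hQ2
  have hmax : Measurable fun p : ℝ × ℝ => max p.1 p.2 := measurable_fst.max measurable_snd
  have hSα : ∀ᵐ u ∂(Q.prod Q).map (fun p => max p.1 p.2),
      α u * Sα u = α u * (α u * cdf Q u + 4 * ∫ t in Ioi u, α t ∂Q) := by
    filter_upwards [ae_mem_map_max measurableSet_Icc (mem_ae_iff.2 hQsupp)] with u hu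
    rw [hS, toReal_measure_Icc_eq_cdf hQsupp hu.2, setIntegral_Ioc_one_eq_Ioi hQsupp _ hu.1]
  have hsymm (y : ℝ) : ∫ s, α (max s y) ∂Q = ∫ t, α (max y t) ∂Q := by simp_rw [max_comm _ y]
  rw [integral_map hmax.aemeasurable hαm.aestronglyMeasurable] at hmean
  rw [integral_Lstar_sq Q (φ := fun p => α (max p.1 p.2)) (hαm.comp hmax) fun p => hC _, hmean,
    integral_map hmax.aemeasurable (hαm.pow_const 2).aestronglyMeasurable, integral_congr_ae hSα,
    integral_map_max_mul_eq hαm hC]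
  simp only [hsymm]
  ring
end
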